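/- For every real-valued pinwheel instance A = (a_1, a_2) with 1 ≤ a_1 ≤ a_2 and 1/a_1 + 1/a_2 ≤ 5/6, at least one of the three periodic schedules |111112|, |112|, |12| is valid for A. -/
import Mathlib


/-- A schedule `S : ℤ → Fin k` is valid for the real-valued pinwheel instance
`a : Fin k → ℝ` if for every task `i`, every positive integer `l`, and every
integer `m`, task `i` is performed at least `l` times on the days
`t ∈ [m, m + ⌈l * a i⌉)`. -/
def PinValid {k : ℕ} (a : Fin k → ℝ) (S : ℤ → Fin k) : Prop :=
  ∀ i : Fin k, ∀ l : ℕ, 0 < l → ∀ m : ℤ,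
    (l : ℕ) ≤ ((Finset.Ico m (m + ⌈(l : ℝ) * a i⌉)).filter (fun t => S t = i)).card

/-- A real-valued pinwheel instance is schedulable if some schedule is valid for it. -/
def PinSchedulable {k : ℕ} (a : Fin k → ℝ) : Prop := ∃ S : ℤ → Fin k, PinValid a S

/-- The periodic schedule `|111112|`. -/
def S111112 : ℤ → Fin 2 := fun t => if t % 6 = 5 then 1 else 0

/-- The periodic schedule `|112|`. -/
def S112 : ℤ → Fin 2 := fun t => if t % 3 = 2 then 1 else 0

/-- The periodic schedule `|12|`. -/
def S12 : ℤ → Fin 2 := fun t => if t % 2 = 1 then 1 else 0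

private lemma mod_singleton (p ρ m : ℤ) (hp : 0 < p) (h0 : 0 ≤ ρ) (hρ : ρ < p) :
    (Finset.Ico m (m + p)).filter (fun t => t % p = ρ) = {m + (ρ - m) % p} := by
  have hmem : (m + (ρ - m) % p) % p = ρ := by
    have h1 : (m + (ρ - m) % p) % p = (m + (ρ - m)) % p := by
      rw [Int.add_emod, Int.emod_emod_of_dvd _ dvd_rfl, ← Int.add_emod]
    rw [h1, show m + (ρ - m) = ρ by ring, Int.emod_eq_of_lt h0 hρ]
  ext t
  simp only [Finset.mem_filter, Finset.mem_Ico, Finset.mem_singleton]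
  constructor
  · rintro ⟨⟨h1, h2⟩, h3⟩
    have e1 : (t - m) % p = (ρ - m) % p := by
      conv_lhs => rw [Int.sub_emod, h3]
      conv_rhs => rw [Int.sub_emod, Int.emod_eq_of_lt h0 hρ]
    have e2 : (t - m) % p = t - m := Int.emod_eq_of_lt (by omega) (by omega)
    omega
  · rintro rfl
    have ha := Int.emod_nonneg (ρ - m) (ne_of_gt hp)
    have hb := Int.emod_lt_of_pos (ρ - m) hp
    exact ⟨⟨by omega, by omega⟩, hmem⟩

private lemma card_eq_period (p ρ m : ℤ) (hp : 0 < p) (h0 : 0 ≤ ρ) (hρ : ρ < p) :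
    ((Finset.Ico m (m + p)).filter (fun t => t % p = ρ)).card = 1 := by
  rw [mod_singleton p ρ m hp h0 hρ]; simp

private lemma card_ne_period (p ρ m : ℤ) (hp : 0 < p) (h0 : 0 ≤ ρ) (hρ : ρ < p) :
    ((Finset.Ico m (m + p)).filter (fun t => ¬ t % p = ρ)).card + 1 = p.toNat := by
  have h := Finset.card_filter_add_card_filter_not
      (s := Finset.Ico m (m + p)) (p := fun t => t % p = ρ)
  rw [card_eq_period p ρ m hp h0 hρ] at h
  have h3 : (Finset.Ico m (m + p)).card = p.toNat := by
    rw [Int.card_Ico]; congr 1; ring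
  omega

private lemma count_blocks (P : ℤ → Prop) [DecidablePred P] (p : ℤ) (c : ℕ)
    (hc : ∀ m : ℤ, ((Finset.Ico m (m + p)).filter P).card = c) (hp : 0 < p) :
    ∀ (q : ℕ) (m : ℤ), ((Finset.Ico m (m + (q : ℤ) * p)).filter P).card = q * c := by
  intro q
  induction q with
  | zero => intro m; simp
  | succ n ih =>
    intro m
    have hsplit : Finset.Ico m (m + ((n+1 : ℕ) : ℤ) * p) =
        Finset.Ico m (m + p) ∪ Finset.Ico (m + p) (m + ((n+1 : ℕ) : ℤ) * p) := by
      rw [Finset.Ico_union_Ico_eq_Ico]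
      · omega
      · push_cast
        nlinarith [Int.ofNat_nonneg n]
    rw [hsplit, Finset.filter_union,
      Finset.card_union_of_disjoint
        (Finset.disjoint_filter_filter (Finset.Ico_disjoint_Ico_consecutive _ _ _)),
      hc m]
    have h2 : Finset.Ico (m + p) (m + ((n+1 : ℕ) : ℤ) * p)
        = Finset.Ico (m + p) ((m + p) + (n : ℤ) * p) := by
      congr 1; push_cast; ring
    rw [h2, ih (m + p)]
    ring

private lemma count_mono (P : ℤ → Prop) [DecidablePred P] (m b b' : ℤ) (h : b ≤ b') :
    ((Finset.Ico m b).filter P).card ≤ ((Finset.Ico m b').filter P).card :=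
  Finset.card_le_card (Finset.filter_subset_filter P (Finset.Ico_subset_Ico le_rfl h))

private lemma window_ne (p ρ m w : ℤ) (hp : 0 < p) (h0 : 0 ≤ ρ) (hρ : ρ < p)
    (_hw0 : 0 ≤ w) (hwp : w ≤ p) :
    w.toNat ≤ ((Finset.Ico m (m + w)).filter (fun t => ¬ t % p = ρ)).card + 1 := by
  have h1 : ((Finset.Ico m (m + w)).filter (fun t => t % p = ρ)).card ≤ 1 := by
    have h := count_mono (fun t => t % p = ρ) m (m + w) (m + p) (by omega)
    rw [card_eq_period p ρ m hp h0 hρ] at h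
    exact h
  have h2 := Finset.card_filter_add_card_filter_not
      (s := Finset.Ico m (m + w)) (p := fun t => t % p = ρ)
  have h3 : (Finset.Ico m (m + w)).card = w.toNat := by
    rw [Int.card_Ico]; congr 1; ring
  omega

private lemma count_ne_blocks (p ρ : ℤ) (hp : 0 < p) (h0 : 0 ≤ ρ) (hρ : ρ < p)
    (q : ℕ) (m : ℤ) :
    ((Finset.Ico m (m + (q : ℤ) * p)).filter (fun t => ¬ t % p = ρ)).card
      = q * (p - 1).toNat := by
  refine count_blocks _ p (p - 1).toNat (fun m' => ?_) hp q m
  have := card_ne_period p ρ m' hp h0 hρ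
  omega

private lemma count_ne_ge (p ρ : ℤ) (hp : 0 < p) (h0 : 0 ≤ ρ) (hρ : ρ < p)
    (q : ℕ) (r m : ℤ) (hr0 : 0 ≤ r) (hrp : r ≤ p) :
    q * (p - 1).toNat + r.toNat ≤
      ((Finset.Ico m (m + ((q : ℤ) * p + r))).filter (fun t => ¬ t % p = ρ)).card + 1 := by
  have hsplit : Finset.Ico m (m + ((q : ℤ) * p + r)) =
      Finset.Ico m (m + (q : ℤ) * p) ∪
        Finset.Ico (m + (q : ℤ) * p) (m + ((q : ℤ) * p + r)) := by
    rw [Finset.Ico_union_Ico_eq_Ico]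
    · nlinarith [Int.ofNat_nonneg q]
    · omega
  rw [hsplit, Finset.filter_union,
    Finset.card_union_of_disjoint
      (Finset.disjoint_filter_filter (Finset.Ico_disjoint_Ico_consecutive _ _ _)),
    count_ne_blocks p ρ hp h0 hρ q m]
  have hwin := window_ne p ρ (m + (q : ℤ) * p) r hp h0 hρ hr0 hrp
  have he : m + ((q : ℤ) * p + r) = (m + (q : ℤ) * p) + r := by ring
  rw [he]
  omega

private lemma ceil_bound (l : ℕ) (a : ℝ) (c : ℤ) (h : ((c : ℝ) - 1) < (l : ℝ) * a) :
    c ≤ ⌈(l : ℝ) * a⌉ := by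
  have : c - 1 < ⌈(l : ℝ) * a⌉ := Int.lt_ceil.mpr (by push_cast; linarith)
  omega

/-- Count of residue-`ρ` days (mod `p`), at least `q` in an interval of length `≥ q*p`. -/
private lemma count_eq_ge (p ρ : ℤ) (hp : 0 < p) (h0 : 0 ≤ ρ) (hρ : ρ < p)
    (q : ℕ) (m b : ℤ) (hb : m + (q : ℤ) * p ≤ b) :
    q ≤ ((Finset.Ico m b).filter (fun t => t % p = ρ)).card := by
  have h1 := count_blocks (fun t => t % p = ρ) p 1
      (fun m' => card_eq_period p ρ m' hp h0 hρ) hp q m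
  have h2 := count_mono (fun t => t % p = ρ) m (m + (q : ℤ) * p) b hb
  omega

/-- Count of non-residue-`ρ` days, full blocks version. -/
private lemma count_ne_ge_blocks (p ρ : ℤ) (hp : 0 < p) (h0 : 0 ≤ ρ) (hρ : ρ < p)
    (q : ℕ) (m b : ℤ) (hb : m + (q : ℤ) * p ≤ b) :
    q * (p - 1).toNat ≤ ((Finset.Ico m b).filter (fun t => ¬ t % p = ρ)).card := by
  have h1 := count_ne_blocks p ρ hp h0 hρ q m
  have h2 := count_mono (fun t => ¬ t % p = ρ) m (m + (q : ℤ) * p) b hb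
  omega

/-- Count of non-residue-`ρ` days, blocks plus remainder version. -/
private lemma count_ne_ge_rem (p ρ : ℤ) (hp : 0 < p) (h0 : 0 ≤ ρ) (hρ : ρ < p)
    (q : ℕ) (r m b : ℤ) (hr0 : 0 ≤ r) (hrp : r ≤ p)
    (hb : m + ((q : ℤ) * p + r) ≤ b) :
    q * (p - 1).toNat + r.toNat ≤
      ((Finset.Ico m b).filter (fun t => ¬ t % p = ρ)).card + 1 := by
  have h1 := count_ne_ge p ρ hp h0 hρ q r m hr0 hrp
  have h2 := count_mono (fun t => ¬ t % p = ρ) m (m + ((q : ℤ) * p + r)) b hb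
  omega

private lemma valid_S12 (a₁ a₂ : ℝ) (ha₁ : 2 ≤ a₁) (ha₂ : 2 ≤ a₂) :
    PinValid ![a₁, a₂] S12 := by
  intro i l hl m
  have hl' : (1 : ℝ) ≤ (l : ℝ) := by exact_mod_cast hl
  fin_cases i <;>
    simp only [Matrix.cons_val_zero, Matrix.cons_val_one, Matrix.head_cons,
      Fin.mk_one, Fin.zero_eta]
  · -- task 0 : days with t % 2 ≠ 1
    have hceil : m + (l : ℤ) * 2 ≤ m + ⌈(l : ℝ) * a₁⌉ := by
      have := ceil_bound l a₁ ((l : ℤ) * 2) (by push_cast; nlinarith)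
      omega
    have hfe : (Finset.Ico m (m + ⌈(l : ℝ) * a₁⌉)).filter (fun t => S12 t = 0)
        = (Finset.Ico m (m + ⌈(l : ℝ) * a₁⌉)).filter (fun t => ¬ t % 2 = 1) := by
      apply Finset.filter_congr; intro t _; unfold S12; split_ifs with h <;> simp [h]
    rw [hfe]
    have := count_ne_ge_blocks 2 1 (by norm_num) (by norm_num) (by norm_num) l m
      (m + ⌈(l : ℝ) * a₁⌉) hceil
    simpa using this
  · -- task 1 : days with t % 2 = 1
    have hceil : m + (l : ℤ) * 2 ≤ m + ⌈(l : ℝ) * a₂⌉ := by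
      have := ceil_bound l a₂ ((l : ℤ) * 2) (by push_cast; nlinarith)
      omega
    have hfe : (Finset.Ico m (m + ⌈(l : ℝ) * a₂⌉)).filter (fun t => S12 t = 1)
        = (Finset.Ico m (m + ⌈(l : ℝ) * a₂⌉)).filter (fun t => t % 2 = 1) := by
      apply Finset.filter_congr; intro t _; unfold S12; split_ifs with h <;> simp [h]
    rw [hfe]
    exact count_eq_ge 2 1 (by norm_num) (by norm_num) (by norm_num) l m _ hceil

private lemma valid_S112 (a₁ a₂ : ℝ) (ha₁ : 3 / 2 ≤ a₁) (ha₂ : 3 ≤ a₂) :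
    PinValid ![a₁, a₂] S112 := by
  intro i l hl m
  have hl' : (1 : ℝ) ≤ (l : ℝ) := by exact_mod_cast hl
  fin_cases i <;>
    simp only [Matrix.cons_val_zero, Matrix.cons_val_one, Matrix.head_cons,
      Fin.mk_one, Fin.zero_eta]
  · -- task 0 : days with t % 3 ≠ 2
    have hfe : (Finset.Ico m (m + ⌈(l : ℝ) * a₁⌉)).filter (fun t => S112 t = 0)
        = (Finset.Ico m (m + ⌈(l : ℝ) * a₁⌉)).filter (fun t => ¬ t % 3 = 2) := by
      apply Finset.filter_congr; intro t _; unfold S112; split_ifs with h <;> simp [h]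
    rw [hfe]
    rcases Nat.even_or_odd l with ⟨q, hq⟩ | ⟨q, hq⟩
    · -- l = 2q
      have hq' : l = 2 * q := by omega
      have hceil : m + (q : ℤ) * 3 ≤ m + ⌈(l : ℝ) * a₁⌉ := by
        have := ceil_bound l a₁ ((q : ℤ) * 3)
          (by rw [hq']; push_cast; nlinarith [Nat.cast_nonneg (α := ℝ) q])
        omega
      have := count_ne_ge_blocks 3 2 (by norm_num) (by norm_num) (by norm_num) q m
        (m + ⌈(l : ℝ) * a₁⌉) hceil
      simp only [show ((3:ℤ)-1).toNat = 2 from rfl, show ((6:ℤ)-1).toNat = 5 from rfl] at this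
      omega
    · -- l = 2q + 1
      have hceil : m + ((q : ℤ) * 3 + 2) ≤ m + ⌈(l : ℝ) * a₁⌉ := by
      -- need (3q+1 : ℝ) < l * a₁
        have := ceil_bound l a₁ ((q : ℤ) * 3 + 2)
          (by rw [hq]; push_cast; nlinarith [Nat.cast_nonneg (α := ℝ) q])
        omega
      have := count_ne_ge_rem 3 2 (by norm_num) (by norm_num) (by norm_num) q 2 m
        (m + ⌈(l : ℝ) * a₁⌉) (by norm_num) (by norm_num) hceil
      simp only [show ((3:ℤ)-1).toNat = 2 from rfl, show ((6:ℤ)-1).toNat = 5 from rfl] at this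
      omega
  · -- task 1 : days with t % 3 = 2
    have hceil : m + (l : ℤ) * 3 ≤ m + ⌈(l : ℝ) * a₂⌉ := by
      have := ceil_bound l a₂ ((l : ℤ) * 3) (by push_cast; nlinarith)
      omega
    have hfe : (Finset.Ico m (m + ⌈(l : ℝ) * a₂⌉)).filter (fun t => S112 t = 1)
        = (Finset.Ico m (m + ⌈(l : ℝ) * a₂⌉)).filter (fun t => t % 3 = 2) := by
      apply Finset.filter_congr; intro t _; unfold S112; split_ifs with h <;> simp [h]
    rw [hfe]
    exact count_eq_ge 3 2 (by norm_num) (by norm_num) (by norm_num) l m _ hceil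

private lemma valid_S111112 (a₁ a₂ : ℝ) (ha₁ : 6 / 5 ≤ a₁) (ha₂ : 6 ≤ a₂) :
    PinValid ![a₁, a₂] S111112 := by
  intro i l hl m
  have hl' : (1 : ℝ) ≤ (l : ℝ) := by exact_mod_cast hl
  fin_cases i <;>
    simp only [Matrix.cons_val_zero, Matrix.cons_val_one, Matrix.head_cons,
      Fin.mk_one, Fin.zero_eta]
  · -- task 0 : days with t % 6 ≠ 5
    have hfe : (Finset.Ico m (m + ⌈(l : ℝ) * a₁⌉)).filter (fun t => S111112 t = 0)
        = (Finset.Ico m (m + ⌈(l : ℝ) * a₁⌉)).filter (fun t => ¬ t % 6 = 5) := by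
      apply Finset.filter_congr; intro t _; unfold S111112; split_ifs with h <;> simp [h]
    rw [hfe]
    set q : ℕ := l / 5 with hqdef
    set r : ℕ := l % 5 with hrdef
    have hlq : l = 5 * q + r := by omega
    have hr5 : r < 5 := Nat.mod_lt _ (by norm_num)
    rcases Nat.eq_zero_or_pos r with hr0 | hrpos
    · -- r = 0
      have hceil : m + (q : ℤ) * 6 ≤ m + ⌈(l : ℝ) * a₁⌉ := by
        have := ceil_bound l a₁ ((q : ℤ) * 6)
          (by rw [hlq, hr0]; push_cast; nlinarith [Nat.cast_nonneg (α := ℝ) q])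
        omega
      have := count_ne_ge_blocks 6 5 (by norm_num) (by norm_num) (by norm_num) q m
        (m + ⌈(l : ℝ) * a₁⌉) hceil
      simp only [show ((3:ℤ)-1).toNat = 2 from rfl, show ((6:ℤ)-1).toNat = 5 from rfl] at this
      omega
    · -- 1 ≤ r ≤ 4
      have hceil : m + ((q : ℤ) * 6 + ((r : ℤ) + 1)) ≤ m + ⌈(l : ℝ) * a₁⌉ := by
        have hr1 : (1 : ℝ) ≤ (r : ℝ) := by exact_mod_cast hrpos
        have := ceil_bound l a₁ ((q : ℤ) * 6 + ((r : ℤ) + 1))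
          (by rw [hlq]; push_cast; nlinarith [Nat.cast_nonneg (α := ℝ) q])
        omega
      have := count_ne_ge_rem 6 5 (by norm_num) (by norm_num) (by norm_num) q
        ((r : ℤ) + 1) m (m + ⌈(l : ℝ) * a₁⌉) (by omega) (by omega) hceil
      have hrt : ((r : ℤ) + 1).toNat = r + 1 := by omega
      rw [hrt] at this
      simp only [show ((3:ℤ)-1).toNat = 2 from rfl, show ((6:ℤ)-1).toNat = 5 from rfl] at this
      omega
  · -- task 1 : days with t % 6 = 5
    have hceil : m + (l : ℤ) * 6 ≤ m + ⌈(l : ℝ) * a₂⌉ := by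
      have := ceil_bound l a₂ ((l : ℤ) * 6) (by push_cast; nlinarith)
      omega
    have hfe : (Finset.Ico m (m + ⌈(l : ℝ) * a₂⌉)).filter (fun t => S111112 t = 1)
        = (Finset.Ico m (m + ⌈(l : ℝ) * a₂⌉)).filter (fun t => t % 6 = 5) := by
      apply Finset.filter_congr; intro t _; unfold S111112; split_ifs with h <;> simp [h]
    rw [hfe]
    exact count_eq_ge 6 5 (by norm_num) (by norm_num) (by norm_num) l m _ hceil

theorem two_periods_common_schedules
    (a₁ a₂ : ℝ) (h₁ : 1 ≤ a₁) (h₁₂ : a₁ ≤ a₂)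
    (hdens : 1 / a₁ + 1 / a₂ ≤ 5 / 6) :
    PinValid ![a₁, a₂] S111112 ∨ PinValid ![a₁, a₂] S112 ∨
      PinValid ![a₁, a₂] S12 := by
  have ha₁pos : (0 : ℝ) < a₁ := by linarith
  have ha₂pos : (0 : ℝ) < a₂ := by linarith
  have key : 6 * a₂ + 6 * a₁ ≤ 5 * (a₁ * a₂) := by
    have h := hdens
    rw [div_add_div _ _ (ne_of_gt ha₁pos) (ne_of_gt ha₂pos), div_le_div_iff₀
      (by positivity) (by norm_num)] at h
    nlinarith
  rcases le_or_gt 2 a₁ with h2 | h2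
  · exact Or.inr (Or.inr (valid_S12 a₁ a₂ h2 (h2.trans h₁₂)))
  rcases le_or_gt (3 / 2) a₁ with h32 | h32
  · refine Or.inr (Or.inl (valid_S112 a₁ a₂ h32 ?_))
    nlinarith [mul_pos (sub_pos.mpr h2) (by nlinarith : (0:ℝ) < 5 * a₂ - 6)]
  · refine Or.inl (valid_S111112 a₁ a₂ ?_ ?_)
    · nlinarith
    · nlinarith [mul_pos (sub_pos.mpr h32) (by nlinarith : (0:ℝ) < 5 * a₂ - 6)]
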